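/- arXiv:2402.00507 — 7 statements merged into one kernel-verified Lean document; each statement's English description precedes it below -/
import Mathlib

section
/- Let (X, 𝓕, μ) be a probability space, (M, 𝔐) a measurable space, and f : X × X → M a measurable function that is symmetric, i.e., f(x,y) = f(y,x) for all x, y. The following three properties are equivalent. (Ind): writing ν for the pushforward of μ × μ under f, the pushforward of μ × μ under (x,y) ↦ (x, f(x,y)) equals μ ⊗ ν and the pushforward of μ × μ under (x,y) ↦ (y, f(x,y)) equals μ ⊗ ν (i.e., for independent X, Y of law μ and F = f(X,Y), the variables X, Y, F are pairwise independent). (Hex'): for every balanced decomposition (μ₀, μ₁) of μ, the pushforward of μ₀ × μ₀ under f equals the pushforward of μ₁ × μ₁ under f. (Hex''): for all balanced decompositions (μ₀, μ₁) and (ν₀, ν₁) of μ, the pushforward of μ₀ × ν₀ under f equals the pushforward of μ₁ × ν₁ under f. -/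
open MeasureTheory
open scoped ENNReal

namespace Stmt3Aux

lemma enn_double_cancel {x y : ℝ≥0∞} (h : x + x = y + y) : x = y := by
  rw [← two_mul, ← two_mul] at h
  exact (ENNReal.mul_right_inj (by norm_num) (by norm_num)).1 h

lemma enn_solve {x y n a : ℝ≥0∞} (hn : n ≠ ∞) (ha : a ≤ 1)
    (hxy : x + y = n) (he : x + (1 - a) * n = y + a * n) : x = a * n := by
  have h2 : (x + a * n) + (x + (1 - a) * n) = (x + a * n) + (y + a * n) := by rw [he]
  have hl : (x + a * n) + (x + (1 - a) * n) = (x + x) + n := by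
    have h3 : a * n + (1 - a) * n = n := by
      rw [← add_mul, add_tsub_cancel_of_le ha, one_mul]
    calc (x + a * n) + (x + (1 - a) * n) = (x + x) + (a * n + (1 - a) * n) := by ring
      _ = (x + x) + n := by rw [h3]
  have hr : (x + a * n) + (y + a * n) = (a * n + a * n) + n := by
    calc (x + a * n) + (y + a * n) = (a * n + a * n) + (x + y) := by ring
      _ = (a * n + a * n) + n := by rw [hxy]
  rw [hl, hr] at h2
  exact enn_double_cancel ((ENNReal.add_left_inj hn).1 h2)

variable {X M : Type*} [MeasurableSpace X] [MeasurableSpace M]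

lemma smul_prod' (c : ℝ≥0∞) (μ : Measure X) (ν : Measure X) [SFinite μ] [SFinite ν] :
    (c • μ).prod ν = c • (μ.prod ν) := by
  ext s hs
  rw [Measure.prod_apply hs, Measure.smul_apply, Measure.prod_apply hs,
    lintegral_smul_measure, smul_eq_mul]

lemma prod_smul' (c : ℝ≥0∞) (μ : Measure X) (ν : Measure X) [SFinite μ] [SFinite ν] :
    μ.prod (c • ν) = c • (μ.prod ν) := by
  ext s hs
  rw [Measure.prod_apply hs, Measure.smul_apply, Measure.prod_apply hs, smul_eq_mul,
    ← lintegral_const_mul _ (measurable_measure_prodMk_left hs)]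
  simp

/-- For symmetric `f`, mapping a product measure is commutative. -/
lemma mapf_comm (f : X × X → M) (hf : Measurable f)
    (hsymm : ∀ x y : X, f (x, y) = f (y, x))
    (ρ σ : Measure X) [SFinite ρ] [SFinite σ] :
    Measure.map f (ρ.prod σ) = Measure.map f (σ.prod ρ) := by
  have hsw : f ∘ Prod.swap = f := funext fun p => hsymm p.2 p.1
  calc Measure.map f (ρ.prod σ) = Measure.map f (Measure.map Prod.swap (σ.prod ρ)) := by
        rw [Measure.prod_swap]
    _ = Measure.map (f ∘ Prod.swap) (σ.prod ρ) := by
        rw [Measure.map_map hf measurable_swap]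
    _ = Measure.map f (σ.prod ρ) := by rw [hsw]

lemma mapf_prod_left (μ : Measure X) [IsProbabilityMeasure μ]
    (f : X × X → M) (hf : Measurable f)
    (hInd : Measure.map (fun q : X × X => (q.1, f q)) (μ.prod μ) =
      μ.prod (Measure.map f (μ.prod μ)))
    (ρ : Measure X) [IsFiniteMeasure ρ] (hac : ρ ≪ μ) (h1 : ρ Set.univ = 1) :
    Measure.map f (ρ.prod μ) = Measure.map f (μ.prod μ) := by
  set ν := Measure.map f (μ.prod μ) with hν
  haveI : IsProbabilityMeasure ν := Measure.isProbabilityMeasure_map hf.aemeasurable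
  set g := ρ.rnDeriv μ with hg
  have hgm : Measurable g := Measure.measurable_rnDeriv ρ μ
  have hρ : μ.withDensity g = ρ := Measure.withDensity_rnDeriv_eq ρ μ hac
  have hint : ∫⁻ x, g x ∂μ = 1 := by rw [hg, Measure.lintegral_rnDeriv hac, h1]
  ext B hB
  have hs : MeasurableSet (f ⁻¹' B) := hf hB
  set F : X × M → ℝ≥0∞ := fun z => g z.1 * Set.indicator B 1 z.2 with hF
  have hFm : Measurable F :=
    (hgm.comp measurable_fst).mul ((measurable_one.indicator hB).comp measurable_snd)
  have hTm : Measurable (fun q : X × X => (q.1, f q)) := measurable_fst.prodMk hf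
  have step1 : (ρ.prod μ) (f ⁻¹' B) = ∫⁻ x, g x * μ (Prod.mk x ⁻¹' (f ⁻¹' B)) ∂μ := by
    rw [Measure.prod_apply hs, ← hρ,
      lintegral_withDensity_eq_lintegral_mul _ hgm (measurable_measure_prodMk_left hs)]
    rfl
  have step2 : ∫⁻ q, F (q.1, f q) ∂(μ.prod μ)
      = ∫⁻ x, g x * μ (Prod.mk x ⁻¹' (f ⁻¹' B)) ∂μ := by
    have hcomp : Measurable fun q : X × X => F (q.1, f q) := hFm.comp hTm
    rw [lintegral_prod _ hcomp.aemeasurable]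
    congr 1
    funext x
    calc ∫⁻ y, F ((x, y).1, f (x, y)) ∂μ
        = ∫⁻ y, g x * Set.indicator (Prod.mk x ⁻¹' (f ⁻¹' B)) 1 y ∂μ :=
          lintegral_congr fun y => by
            by_cases hy : f (x, y) ∈ B
            · simp [hF, Set.indicator_apply, Set.mem_preimage, hy]
            · simp [hF, Set.indicator_apply, Set.mem_preimage, hy]
      _ = g x * μ (Prod.mk x ⁻¹' (f ⁻¹' B)) := by
          rw [lintegral_const_mul _ (measurable_one.indicator (measurable_prodMk_left hs)),
            lintegral_indicator_one (measurable_prodMk_left hs)]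
  have step3 : ∫⁻ q, F (q.1, f q) ∂(μ.prod μ) = ∫⁻ z, F z ∂(μ.prod ν) := by
    rw [← lintegral_map hFm hTm, hInd]
  have step4 : ∫⁻ z, F z ∂(μ.prod ν) = ν B := by
    rw [hF]
    rw [lintegral_prod_mul hgm.aemeasurable ((measurable_one.indicator hB)).aemeasurable,
      hint, lintegral_indicator_one hB, one_mul]
  rw [Measure.map_apply hf hB, Measure.map_apply hf hB, step1, ← step2, step3, step4, hν,
    Measure.map_apply hf hB]

lemma ind_of_hexpp (μ : Measure X) [IsProbabilityMeasure μ]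
    (f : X × X → M) (hf : Measurable f)
    (hex : ∀ μ₀ μ₁ ν₀ ν₁ : Measure X, IsProbabilityMeasure μ₀ → IsProbabilityMeasure μ₁ →
        IsProbabilityMeasure ν₀ → IsProbabilityMeasure ν₁ →
        μ₀ + μ₁ = (2 : ℝ≥0∞) • μ → ν₀ + ν₁ = (2 : ℝ≥0∞) • μ →
        Measure.map f (μ₀.prod ν₀) = Measure.map f (μ₁.prod ν₁)) :
    Measure.map (fun q : X × X => (q.1, f q)) (μ.prod μ) =
      μ.prod (Measure.map f (μ.prod μ)) := by
  set ν := Measure.map f (μ.prod μ) with hν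
  haveI : IsProbabilityMeasure ν := Measure.isProbabilityMeasure_map hf.aemeasurable
  have hTm : Measurable (fun q : X × X => (q.1, f q)) := measurable_fst.prodMk hf
  have key : ∀ s : Set X, MeasurableSet s → ∀ t : Set M, MeasurableSet t →
      Measure.map f ((μ.restrict s).prod μ) t = μ s * ν t := by
    intro s hs t ht
    set a := μ s with hadef
    have ha1 : a ≤ 1 := prob_le_one
    set μ₀ : Measure X := μ.restrict s + (1 - a) • μ with hμ₀
    set μ₁ : Measure X := μ.restrict sᶜ + a • μ with hμ₁
    have hp0 : IsProbabilityMeasure μ₀ := by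
      constructor
      rw [hμ₀, Measure.add_apply, Measure.restrict_apply_univ, Measure.smul_apply,
        measure_univ, smul_eq_mul, mul_one, add_tsub_cancel_of_le ha1]
    have hp1 : IsProbabilityMeasure μ₁ := by
      constructor
      rw [hμ₁, Measure.add_apply, Measure.restrict_apply_univ, Measure.smul_apply,
        measure_univ, smul_eq_mul, mul_one, prob_compl_eq_one_sub hs,
        tsub_add_cancel_of_le ha1]
    have hsum : μ₀ + μ₁ = (2 : ℝ≥0∞) • μ := by
      rw [hμ₀, hμ₁]
      have h1 : ((1 - a) • μ + a • μ) = μ := by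
        rw [← add_smul, tsub_add_cancel_of_le ha1, one_smul]
      calc μ.restrict s + (1 - a) • μ + (μ.restrict sᶜ + a • μ)
          = (μ.restrict s + μ.restrict sᶜ) + ((1 - a) • μ + a • μ) := by
            abel
        _ = μ + μ := by rw [Measure.restrict_add_restrict_compl hs, h1]
        _ = (2 : ℝ≥0∞) • μ := (two_smul _ μ).symm
    have hμμ : μ + μ = (2 : ℝ≥0∞) • μ := (two_smul _ μ).symm
    have he := hex μ₀ μ₁ μ μ hp0 hp1 inferInstance inferInstance hsum hμμ
    have hx := congrArg (fun m : Measure M => m t) he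
    simp only [hμ₀, hμ₁, Measure.add_prod, smul_prod', Measure.map_add _ _ hf,
      Measure.map_smul, Measure.add_apply, Measure.smul_apply, smul_eq_mul] at hx
    have hm : Measure.map f ((μ.restrict s).prod μ)
        + Measure.map f ((μ.restrict sᶜ).prod μ) = ν := by
      rw [hν, ← Measure.map_add _ _ hf, ← Measure.add_prod,
        Measure.restrict_add_restrict_compl hs]
    have hxy := congrArg (fun m : Measure M => m t) hm
    simp only [Measure.add_apply] at hxy
    exact enn_solve (measure_ne_top ν t) ha1 hxy hx
  refine (Measure.prod_eq fun s t hs ht => ?_).symm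
  rw [Measure.map_apply hTm (hs.prod ht)]
  have hpre : (fun q : X × X => (q.1, f q)) ⁻¹' (s ×ˢ t) = (s ×ˢ Set.univ) ∩ f ⁻¹' t := by
    ext q; simp [Set.mem_prod]
  rw [hpre, Set.inter_comm, ← Measure.restrict_apply (hf ht),
    ← Measure.prod_restrict, Measure.restrict_univ, ← Measure.map_apply hf ht]
  exact key s hs t ht

lemma hexpp_of_ind (μ : Measure X) [IsProbabilityMeasure μ]
    (f : X × X → M) (hf : Measurable f)
    (hsymm : ∀ x y : X, f (x, y) = f (y, x))
    (hInd : Measure.map (fun q : X × X => (q.1, f q)) (μ.prod μ) =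
      μ.prod (Measure.map f (μ.prod μ)))
    (μ₀ μ₁ ν₀ ν₁ : Measure X) (h0 : IsProbabilityMeasure μ₀) (h1 : IsProbabilityMeasure μ₁)
    (h2 : IsProbabilityMeasure ν₀) (h3 : IsProbabilityMeasure ν₁)
    (hμ : μ₀ + μ₁ = (2 : ℝ≥0∞) • μ) (hν' : ν₀ + ν₁ = (2 : ℝ≥0∞) • μ) :
    Measure.map f (μ₀.prod ν₀) = Measure.map f (μ₁.prod ν₁) := by
  haveI := h0; haveI := h1; haveI := h2; haveI := h3
  have hclaim : ∀ ρ ρ' : Measure X, IsProbabilityMeasure ρ → ρ + ρ' = (2 : ℝ≥0∞) • μ →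
      Measure.map f (ρ.prod μ) = Measure.map f (μ.prod μ) := by
    intro ρ ρ' hρ hadd
    haveI := hρ
    have hac : ρ ≪ μ := by
      refine Measure.AbsolutelyContinuous.mk fun s hs h0s => ?_
      have h := congrArg (fun m : Measure X => m s) hadd
      simp only [Measure.add_apply, Measure.smul_apply, smul_eq_mul, h0s, mul_zero] at h
      exact (add_eq_zero.1 h).1
    exact mapf_prod_left μ f hf hInd ρ hac measure_univ
  have hA : ∀ ρ ρ' : Measure X, IsProbabilityMeasure ρ → ρ + ρ' = (2 : ℝ≥0∞) • μ →
      Measure.map f (μ.prod ρ) = Measure.map f (μ.prod μ) := by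
    intro ρ ρ' hρ hadd
    haveI := hρ
    rw [mapf_comm f hf hsymm μ ρ]
    exact hclaim ρ ρ' hρ hadd
  ext B hB
  haveI : IsProbabilityMeasure (Measure.map f (μ₁.prod ν₀)) :=
    Measure.isProbabilityMeasure_map hf.aemeasurable
  have hc : Measure.map f (μ₁.prod ν₀) B ≠ ∞ := measure_ne_top _ _
  -- first relation
  have r1 : Measure.map f (μ₀.prod ν₀) B + Measure.map f (μ₁.prod ν₀) B
      = (2 : ℝ≥0∞) * Measure.map f (μ.prod μ) B := by
    have : Measure.map f (μ₀.prod ν₀) + Measure.map f (μ₁.prod ν₀)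
        = (2 : ℝ≥0∞) • Measure.map f (μ.prod ν₀) := by
      rw [← Measure.map_add _ _ hf, ← Measure.add_prod, hμ, smul_prod', Measure.map_smul]
    have h := congrArg (fun m : Measure M => m B) this
    simp only [Measure.add_apply, Measure.smul_apply, smul_eq_mul] at h
    rw [h, hA ν₀ ν₁ h2 hν']
  have r2 : Measure.map f (μ₁.prod ν₀) B + Measure.map f (μ₁.prod ν₁) B
      = (2 : ℝ≥0∞) * Measure.map f (μ.prod μ) B := by
    have : Measure.map f (μ₁.prod ν₀) + Measure.map f (μ₁.prod ν₁)
        = (2 : ℝ≥0∞) • Measure.map f (μ₁.prod μ) := by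
      rw [← Measure.map_add _ _ hf, ← Measure.prod_add, hν', prod_smul', Measure.map_smul]
    have h := congrArg (fun m : Measure M => m B) this
    simp only [Measure.add_apply, Measure.smul_apply, smul_eq_mul] at h
    rw [h, hclaim μ₁ μ₀ h1 (by rw [add_comm]; exact hμ)]
  have h := r1.trans r2.symm
  rw [add_comm (Measure.map f (μ₁.prod ν₀) B) (Measure.map f (μ₁.prod ν₁) B)] at h
  exact (ENNReal.add_left_inj hc).1 h

lemma hexpp_of_hexp (μ : Measure X) [IsProbabilityMeasure μ]
    (f : X × X → M) (hf : Measurable f)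
    (hsymm : ∀ x y : X, f (x, y) = f (y, x))
    (hex : ∀ μ₀ μ₁ : Measure X, IsProbabilityMeasure μ₀ → IsProbabilityMeasure μ₁ →
        μ₀ + μ₁ = (2 : ℝ≥0∞) • μ →
        Measure.map f (μ₀.prod μ₀) = Measure.map f (μ₁.prod μ₁))
    (μ₀ μ₁ ν₀ ν₁ : Measure X) (h0 : IsProbabilityMeasure μ₀) (h1 : IsProbabilityMeasure μ₁)
    (h2 : IsProbabilityMeasure ν₀) (h3 : IsProbabilityMeasure ν₁)
    (hμ : μ₀ + μ₁ = (2 : ℝ≥0∞) • μ) (hν' : ν₀ + ν₁ = (2 : ℝ≥0∞) • μ) :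
    Measure.map f (μ₀.prod ν₀) = Measure.map f (μ₁.prod ν₁) := by
  haveI := h0; haveI := h1; haveI := h2; haveI := h3
  have e0 := hex μ₀ μ₁ h0 h1 hμ
  have e1 := hex ν₀ ν₁ h2 h3 hν'
  have h2ne0 : (2 : ℝ≥0∞)⁻¹ ≠ 0 := by norm_num
  have h2net : (2 : ℝ≥0∞)⁻¹ ≠ ∞ := by norm_num
  set κ₀ : Measure X := (2 : ℝ≥0∞)⁻¹ • (μ₀ + ν₀) with hκ₀
  set κ₁ : Measure X := (2 : ℝ≥0∞)⁻¹ • (μ₁ + ν₁) with hκ₁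
  have hhalf : ((2 : ℝ≥0∞)⁻¹ • ((2 : ℝ≥0∞) • μ) : Measure X) = μ := by
    rw [smul_smul, ENNReal.inv_mul_cancel (by norm_num) (by norm_num), one_smul]
  have hpκ₀ : IsProbabilityMeasure κ₀ := by
    constructor
    rw [hκ₀, Measure.smul_apply, Measure.add_apply, measure_univ, measure_univ, smul_eq_mul,
      one_add_one_eq_two]
    exact ENNReal.inv_mul_cancel (by norm_num) (by norm_num)
  have hpκ₁ : IsProbabilityMeasure κ₁ := by
    constructor
    rw [hκ₁, Measure.smul_apply, Measure.add_apply, measure_univ, measure_univ, smul_eq_mul,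
      one_add_one_eq_two]
    exact ENNReal.inv_mul_cancel (by norm_num) (by norm_num)
  have hsumκ : κ₀ + κ₁ = (2 : ℝ≥0∞) • μ := by
    rw [hκ₀, hκ₁, ← smul_add]
    have : (μ₀ + ν₀) + (μ₁ + ν₁) = (2 : ℝ≥0∞) • μ + (2 : ℝ≥0∞) • μ := by
      rw [add_add_add_comm, hμ, hν']
    rw [this, smul_add, hhalf, two_smul]
  have hexκ := hex κ₀ κ₁ hpκ₀ hpκ₁ hsumκ
  -- expand both sides
  have hL : Measure.map f (κ₀.prod κ₀)
      = (2 : ℝ≥0∞)⁻¹ • ((2 : ℝ≥0∞)⁻¹ • (Measure.map f (μ₀.prod μ₀)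
        + (Measure.map f (μ₀.prod ν₀) + (Measure.map f (ν₀.prod μ₀)
        + Measure.map f (ν₀.prod ν₀))))) := by
    rw [hκ₀, smul_prod', prod_smul', Measure.map_smul, Measure.map_smul]
    congr 1; congr 1
    rw [Measure.add_prod, Measure.prod_add, Measure.prod_add,
      Measure.map_add _ _ hf, Measure.map_add _ _ hf, Measure.map_add _ _ hf, add_assoc]
  have hR : Measure.map f (κ₁.prod κ₁)
      = (2 : ℝ≥0∞)⁻¹ • ((2 : ℝ≥0∞)⁻¹ • (Measure.map f (μ₁.prod μ₁)
        + (Measure.map f (μ₁.prod ν₁) + (Measure.map f (ν₁.prod μ₁)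
        + Measure.map f (ν₁.prod ν₁))))) := by
    rw [hκ₁, smul_prod', prod_smul', Measure.map_smul, Measure.map_smul]
    congr 1; congr 1
    rw [Measure.add_prod, Measure.prod_add, Measure.prod_add,
      Measure.map_add _ _ hf, Measure.map_add _ _ hf, Measure.map_add _ _ hf, add_assoc]
  rw [hL, hR] at hexκ
  ext B hB
  have h := congrArg (fun m : Measure M => m B) hexκ
  simp only [Measure.smul_apply, Measure.add_apply, smul_eq_mul] at h
  replace h := (ENNReal.mul_right_inj h2ne0 h2net).1 h
  replace h := (ENNReal.mul_right_inj h2ne0 h2net).1 h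
  have hcomm0 : Measure.map f (ν₀.prod μ₀) B = Measure.map f (μ₀.prod ν₀) B := by
    rw [mapf_comm f hf hsymm ν₀ μ₀]
  have hcomm1 : Measure.map f (ν₁.prod μ₁) B = Measure.map f (μ₁.prod ν₁) B := by
    rw [mapf_comm f hf hsymm ν₁ μ₁]
  have he0B : Measure.map f (μ₀.prod μ₀) B = Measure.map f (μ₁.prod μ₁) B := by rw [e0]
  have he1B : Measure.map f (ν₀.prod ν₀) B = Measure.map f (ν₁.prod ν₁) B := by rw [e1]
  rw [hcomm0, hcomm1, he0B, he1B] at h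
  -- h : A + (b + (b + D)) = A + (b' + (b' + D))
  haveI : IsProbabilityMeasure (Measure.map f (μ₁.prod μ₁)) :=
    Measure.isProbabilityMeasure_map hf.aemeasurable
  haveI : IsProbabilityMeasure (Measure.map f (ν₁.prod ν₁)) :=
    Measure.isProbabilityMeasure_map hf.aemeasurable
  have hAne : Measure.map f (μ₁.prod μ₁) B ≠ ∞ := measure_ne_top _ _
  have hDne : Measure.map f (ν₁.prod ν₁) B ≠ ∞ := measure_ne_top _ _
  replace h := (ENNReal.add_right_inj hAne).1 h
  rw [← add_assoc, ← add_assoc] at h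
  replace h := (ENNReal.add_left_inj hDne).1 h
  exact enn_double_cancel h

end Stmt3Aux

/-- **Characterization for abstract probability spaces (symmetric case).**
For a symmetric measurable `f : X × X → M`, the conditions (Ind), (Hex') and (Hex'')
are pairwise equivalent. -/
theorem stmt3 {X M : Type*} [MeasurableSpace X] [MeasurableSpace M]
    (μ : Measure X) [IsProbabilityMeasure μ]
    (f : X × X → M) (hf : Measurable f)
    (hsymm : ∀ x y : X, f (x, y) = f (y, x)) :
    -- (Ind) ↔ (Hex')
    ((Measure.map (fun q : X × X => (q.1, f q)) (μ.prod μ) =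
          μ.prod (Measure.map f (μ.prod μ)) ∧
        Measure.map (fun q : X × X => (q.2, f q)) (μ.prod μ) =
          μ.prod (Measure.map f (μ.prod μ))) ↔
      (∀ μ₀ μ₁ : Measure X, IsProbabilityMeasure μ₀ → IsProbabilityMeasure μ₁ →
        μ₀ + μ₁ = (2 : ℝ≥0∞) • μ →
        Measure.map f (μ₀.prod μ₀) = Measure.map f (μ₁.prod μ₁))) ∧
    -- (Hex') ↔ (Hex'')
    ((∀ μ₀ μ₁ : Measure X, IsProbabilityMeasure μ₀ → IsProbabilityMeasure μ₁ →
        μ₀ + μ₁ = (2 : ℝ≥0∞) • μ →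
        Measure.map f (μ₀.prod μ₀) = Measure.map f (μ₁.prod μ₁)) ↔
      (∀ μ₀ μ₁ ν₀ ν₁ : Measure X, IsProbabilityMeasure μ₀ → IsProbabilityMeasure μ₁ →
        IsProbabilityMeasure ν₀ → IsProbabilityMeasure ν₁ →
        μ₀ + μ₁ = (2 : ℝ≥0∞) • μ → ν₀ + ν₁ = (2 : ℝ≥0∞) • μ →
        Measure.map f (μ₀.prod ν₀) = Measure.map f (μ₁.prod ν₁))) := by
  have hsecond : Measure.map (fun q : X × X => (q.2, f q)) (μ.prod μ)
      = Measure.map (fun q : X × X => (q.1, f q)) (μ.prod μ) := by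
    have hT1 : Measurable (fun q : X × X => (q.1, f q)) := measurable_fst.prodMk hf
    have hcomp : (fun q : X × X => (q.1, f q)) ∘ Prod.swap
        = fun q : X × X => (q.2, f q) := by
      funext q
      exact Prod.ext rfl (hsymm q.2 q.1)
    rw [← hcomp, ← Measure.map_map hT1 measurable_swap, Measure.prod_swap]
  constructor
  · constructor
    · rintro ⟨hInd1, -⟩
      intro μ₀ μ₁ h0 h1 hsum
      exact Stmt3Aux.hexpp_of_ind μ f hf hsymm hInd1 μ₀ μ₁ μ₀ μ₁ h0 h1 h0 h1 hsum hsum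
    · intro hex'
      have hInd1 := Stmt3Aux.ind_of_hexpp μ f hf
        (Stmt3Aux.hexpp_of_hexp μ f hf hsymm hex')
      exact ⟨hInd1, by rw [hsecond]; exact hInd1⟩
  · constructor
    · exact Stmt3Aux.hexpp_of_hexp μ f hf hsymm
    · intro hpp μ₀ μ₁ h0 h1 hsum
      exact hpp μ₀ μ₁ μ₀ μ₁ h0 h1 h0 h1 hsum hsum
end

section
/- Let (X, 𝓕, μ) be a probability space, (M, 𝔐) a measurable space, and f : X × X → M any measurable function (not assumed symmetric). Then the following are equivalent. (Ind): writing ν for the pushforward of μ × μ under f, the pushforward of μ × μ under (x,y) ↦ (x, f(x,y)) equals μ ⊗ ν and the pushforward of μ × μ under (x,y) ↦ (y, f(x,y)) equals μ ⊗ ν. (Hex''): for all balanced decompositions (μ₀, μ₁) and (ν₀, ν₁) of μ, the pushforward of μ₀ × ν₀ under f equals the pushforward of μ₁ × ν₁ under f. -/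
open MeasureTheory
open scoped ENNReal

section Aux

variable {X M : Type*} [MeasurableSpace X] [MeasurableSpace M]

/-- product of withDensity measures -/
lemma myAux_prod_withDensity (μ ν : Measure X) [SigmaFinite μ] [SigmaFinite ν]
    {g h : X → ℝ≥0∞} (hg : Measurable g) (hh : Measurable h)
    [SigmaFinite (μ.withDensity g)] [SigmaFinite (ν.withDensity h)] :
    (μ.withDensity g).prod (ν.withDensity h) =
      (μ.prod ν).withDensity (fun p => g p.1 * h p.2) := by
  refine Measure.prod_eq fun s t hs ht => ?_
  rw [withDensity_apply _ (hs.prod ht), ← Measure.prod_restrict,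
    lintegral_prod_mul hg.aemeasurable hh.aemeasurable,
    withDensity_apply _ hs, withDensity_apply _ ht]

/-- Key integral identity from the first (Ind) condition. -/
lemma myAux_keyA (μ : Measure X) [IsProbabilityMeasure μ] {f : X × X → M} (hf : Measurable f)
    (hInd : Measure.map (fun q : X × X => (q.1, f q)) (μ.prod μ) =
      μ.prod (Measure.map f (μ.prod μ)))
    {φ : X → ℝ≥0∞} (hφ : Measurable φ) {B : Set M} (hB : MeasurableSet B) :
    ∫⁻ q, φ q.1 * B.indicator 1 (f q) ∂(μ.prod μ) =
      (∫⁻ x, φ x ∂μ) * (Measure.map f (μ.prod μ)) B := by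
  have hm : Measurable fun z : X × M => φ z.1 * B.indicator (1 : M → ℝ≥0∞) z.2 :=
    (hφ.comp measurable_fst).mul ((measurable_one.indicator hB).comp measurable_snd)
  have h1 : ∫⁻ q, φ q.1 * B.indicator 1 (f q) ∂(μ.prod μ)
      = ∫⁻ z, φ z.1 * B.indicator 1 z.2
          ∂(Measure.map (fun q : X × X => (q.1, f q)) (μ.prod μ)) := by
    rw [lintegral_map hm (measurable_fst.prodMk hf)]
  rw [h1, hInd, lintegral_prod_mul hφ.aemeasurable
    ((measurable_one.indicator hB)).aemeasurable, lintegral_indicator_one hB]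

/-- Key integral identity from the second (Ind) condition. -/
lemma myAux_keyB (μ : Measure X) [IsProbabilityMeasure μ] {f : X × X → M} (hf : Measurable f)
    (hInd : Measure.map (fun q : X × X => (q.2, f q)) (μ.prod μ) =
      μ.prod (Measure.map f (μ.prod μ)))
    {φ : X → ℝ≥0∞} (hφ : Measurable φ) {B : Set M} (hB : MeasurableSet B) :
    ∫⁻ q, φ q.2 * B.indicator 1 (f q) ∂(μ.prod μ) =
      (∫⁻ x, φ x ∂μ) * (Measure.map f (μ.prod μ)) B := by
  have hm : Measurable fun z : X × M => φ z.1 * B.indicator (1 : M → ℝ≥0∞) z.2 :=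
    (hφ.comp measurable_fst).mul ((measurable_one.indicator hB).comp measurable_snd)
  have h1 : ∫⁻ q, φ q.2 * B.indicator 1 (f q) ∂(μ.prod μ)
      = ∫⁻ z, φ z.1 * B.indicator 1 z.2
          ∂(Measure.map (fun q : X × X => (q.2, f q)) (μ.prod μ)) := by
    rw [lintegral_map hm (measurable_snd.prodMk hf)]
  rw [h1, hInd, lintegral_prod_mul hφ.aemeasurable
    ((measurable_one.indicator hB)).aemeasurable, lintegral_indicator_one hB]

/-- rewriting a set-lintegral over a preimage as an indicator lintegral -/
lemma myAux_setLIntegral_preimage (m : Measure (X × X)) {f : X × X → M} (hf : Measurable f)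
    {B : Set M} (hB : MeasurableSet B) (k l : X → ℝ≥0∞) :
    ∫⁻ q in f ⁻¹' B, k q.1 * l q.2 ∂m
      = ∫⁻ q, k q.1 * l q.2 * B.indicator 1 (f q) ∂m := by
  rw [← lintegral_indicator (hf hB)]
  congr 1; funext q
  by_cases hq : f q ∈ B <;>
    simp [Set.indicator_apply, Set.mem_preimage, hq]

end Aux

/-- **Characterization for abstract probability spaces (not necessarily symmetric case).**
For any measurable `f : X × X → M`, condition (Ind) is equivalent to condition (Hex''). -/
theorem stmt4 {X M : Type*} [MeasurableSpace X] [MeasurableSpace M]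
    (μ : Measure X) [IsProbabilityMeasure μ]
    (f : X × X → M) (hf : Measurable f) :
    -- (Ind)
    (Measure.map (fun q : X × X => (q.1, f q)) (μ.prod μ) =
        μ.prod (Measure.map f (μ.prod μ)) ∧
      Measure.map (fun q : X × X => (q.2, f q)) (μ.prod μ) =
        μ.prod (Measure.map f (μ.prod μ))) ↔
    -- (Hex'')
    (∀ μ₀ μ₁ ν₀ ν₁ : Measure X, IsProbabilityMeasure μ₀ → IsProbabilityMeasure μ₁ →
      IsProbabilityMeasure ν₀ → IsProbabilityMeasure ν₁ →
      μ₀ + μ₁ = (2 : ℝ≥0∞) • μ → ν₀ + ν₁ = (2 : ℝ≥0∞) • μ →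
      Measure.map f (μ₀.prod ν₀) = Measure.map f (μ₁.prod ν₁)) := by
  haveI hνp : IsProbabilityMeasure (Measure.map f (μ.prod μ)) :=
    Measure.isProbabilityMeasure_map hf.aemeasurable
  constructor
  · -- (Ind) → (Hex'')
    rintro ⟨h1, h2⟩ μ₀ μ₁ ν₀ ν₁ p0 p1 q0 q1 hsum hsum'
    haveI := p0; haveI := p1; haveI := q0; haveI := q1
    -- absolute continuity
    have hac0 : μ₀ ≪ μ := Measure.absolutelyContinuous_of_le_smul
      (le_of_le_of_eq (Measure.le_add_right le_rfl) hsum)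
    have hac1 : μ₁ ≪ μ := Measure.absolutelyContinuous_of_le_smul
      (le_of_le_of_eq (Measure.le_add_left le_rfl) hsum)
    have hac0' : ν₀ ≪ μ := Measure.absolutelyContinuous_of_le_smul
      (le_of_le_of_eq (Measure.le_add_right le_rfl) hsum')
    have hac1' : ν₁ ≪ μ := Measure.absolutelyContinuous_of_le_smul
      (le_of_le_of_eq (Measure.le_add_left le_rfl) hsum')
    set g := μ₀.rnDeriv μ with hgdef
    set g' := μ₁.rnDeriv μ with hg'def
    set h := ν₀.rnDeriv μ with hhdef
    set h' := ν₁.rnDeriv μ with hh'def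
    have hgm : Measurable g := Measure.measurable_rnDeriv _ _
    have hg'm : Measurable g' := Measure.measurable_rnDeriv _ _
    have hhm : Measurable h := Measure.measurable_rnDeriv _ _
    have hh'm : Measurable h' := Measure.measurable_rnDeriv _ _
    have hg0 : μ.withDensity g = μ₀ := Measure.withDensity_rnDeriv_eq μ₀ μ hac0
    have hg1 : μ.withDensity g' = μ₁ := Measure.withDensity_rnDeriv_eq μ₁ μ hac1
    have hh0 : μ.withDensity h = ν₀ := Measure.withDensity_rnDeriv_eq ν₀ μ hac0'
    have hh1 : μ.withDensity h' = ν₁ := Measure.withDensity_rnDeriv_eq ν₁ μ hac1'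
    -- integrals of the densities are 1
    have int_one : ∀ (k : X → ℝ≥0∞) (ρ : Measure X), IsProbabilityMeasure ρ →
        μ.withDensity k = ρ → ∫⁻ x, k x ∂μ = 1 := by
      intro k ρ hρ hk
      have : (μ.withDensity k) Set.univ = ρ Set.univ := by rw [hk]
      rwa [withDensity_apply _ MeasurableSet.univ, setLIntegral_univ, measure_univ] at this
    have hgint : ∫⁻ x, g x ∂μ = 1 := int_one g μ₀ p0 hg0
    have hg'int : ∫⁻ x, g' x ∂μ = 1 := int_one g' μ₁ p1 hg1
    have hhint : ∫⁻ x, h x ∂μ = 1 := int_one h ν₀ q0 hh0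
    -- a.e. sums equal 2
    have aesum : ∀ (k l : X → ℝ≥0∞), Measurable k → Measurable l →
        μ.withDensity k + μ.withDensity l = (2 : ℝ≥0∞) • μ →
        (fun x => k x + l x) =ᵐ[μ] (fun _ => (2 : ℝ≥0∞)) := by
      intro k l hk hl hkl
      have hWD : μ.withDensity (fun x => k x + l x) = μ.withDensity (fun _ => (2 : ℝ≥0∞)) := by
        rw [withDensity_const]
        rw [← hkl, ← withDensity_add_left hk]
        rfl
      have hfin : ∫⁻ x, k x + l x ∂μ ≠ ∞ := by
        have : (μ.withDensity (fun x => k x + l x)) Set.univ = ((2 : ℝ≥0∞) • μ) Set.univ := by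
          rw [hWD, withDensity_const]
        rw [withDensity_apply _ MeasurableSet.univ, setLIntegral_univ] at this
        rw [this]
        simp [measure_univ]
      exact (withDensity_eq_iff (hk.add hl).aemeasurable aemeasurable_const hfin).mp hWD
    have hgg' : (fun x => g x + g' x) =ᵐ[μ] (fun _ => (2 : ℝ≥0∞)) := by
      refine aesum g g' hgm hg'm ?_
      rw [hg0, hg1, hsum]
    have hhh' : (fun x => h x + h' x) =ᵐ[μ] (fun _ => (2 : ℝ≥0∞)) := by
      refine aesum h h' hhm hh'm ?_
      rw [hh0, hh1, hsum']
    -- now the main computation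
    ext B hB
    rw [Measure.map_apply hf hB, Measure.map_apply hf hB]
    haveI i0 : SigmaFinite (μ.withDensity g) := by rw [hg0]; infer_instance
    haveI i1 : SigmaFinite (μ.withDensity g') := by rw [hg1]; infer_instance
    haveI i2 : SigmaFinite (μ.withDensity h) := by rw [hh0]; infer_instance
    haveI i3 : SigmaFinite (μ.withDensity h') := by rw [hh1]; infer_instance
    rw [← hg0, ← hh0, ← hg1, ← hh1,
      myAux_prod_withDensity μ μ hgm hhm, myAux_prod_withDensity μ μ hg'm hh'm,
      withDensity_apply _ (hf hB), withDensity_apply _ (hf hB),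
      myAux_setLIntegral_preimage _ hf hB, myAux_setLIntegral_preimage _ hf hB]
    set n := (Measure.map f (μ.prod μ)) B with hn
    set I : (X → ℝ≥0∞) → (X → ℝ≥0∞) → ℝ≥0∞ := fun k l =>
      ∫⁻ q, k q.1 * l q.2 * B.indicator 1 (f q) ∂(μ.prod μ) with hI
    show I g h = I g' h'
    have indm : Measurable fun q : X × X => B.indicator (1 : M → ℝ≥0∞) (f q) :=
      (measurable_one.indicator hB).comp hf
    have measI : ∀ (k l : X → ℝ≥0∞), Measurable k → Measurable l →
        Measurable fun q : X × X => k q.1 * l q.2 * B.indicator 1 (f q) := by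
      intro k l hk hl
      exact ((hk.comp measurable_fst).mul (hl.comp measurable_snd)).mul indm
    -- lift a.e. statements to the product
    have liftae : ∀ (k l : X → ℝ≥0∞), Measurable k → Measurable l →
        ((fun x => k x + l x) =ᵐ[μ] fun _ => (2 : ℝ≥0∞)) →
        ∀ᵐ q ∂(μ.prod μ), k q.1 + l q.1 = 2 := by
      intro k l hk hl hkl
      have hmeas : MeasurableSet {q : X × X | k q.1 + l q.1 = 2} :=
        ((hk.comp measurable_fst).add (hl.comp measurable_fst)) (measurableSet_singleton 2)
      exact (Measure.ae_prod_iff_ae_ae (p := fun q : X × X => k q.1 + l q.1 = 2) hmeas).mpr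
        (hkl.mono fun x hx => Filter.Eventually.of_forall fun y => hx)
    -- Step 1 : I g h + I g' h = 2 * n
    have step1 : I g h + I g' h = 2 * n := by
      rw [hI]
      rw [← lintegral_add_left (measI g h hgm hhm)]
      have hcong : (fun q : X × X => g q.1 * h q.2 * B.indicator 1 (f q)
            + g' q.1 * h q.2 * B.indicator 1 (f q))
          =ᵐ[μ.prod μ] fun q => 2 * (h q.2 * B.indicator 1 (f q)) := by
        refine (liftae g g' hgm hg'm hgg').mono fun q hq => ?_
        show g q.1 * h q.2 * B.indicator 1 (f q) + g' q.1 * h q.2 * B.indicator 1 (f q)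
            = 2 * (h q.2 * B.indicator 1 (f q))
        have e : g q.1 * h q.2 * B.indicator 1 (f q) + g' q.1 * h q.2 * B.indicator 1 (f q)
            = (g q.1 + g' q.1) * (h q.2 * B.indicator 1 (f q)) := by ring
        rw [e, hq]
      rw [lintegral_congr_ae hcong,
        lintegral_const_mul 2 (show Measurable fun q : X × X =>
          h q.2 * B.indicator 1 (f q) from (hhm.comp measurable_snd).mul indm)]
      rw [myAux_keyB μ hf h2 hhm hB, hhint, one_mul, ← hn]
    -- Step 2 : I g' h + I g' h' = 2 * n
    have step2 : I g' h + I g' h' = 2 * n := by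
      rw [hI]
      rw [← lintegral_add_left (measI g' h hg'm hhm)]
      have hcong : (fun q : X × X => g' q.1 * h q.2 * B.indicator 1 (f q)
            + g' q.1 * h' q.2 * B.indicator 1 (f q))
          =ᵐ[μ.prod μ] fun q => 2 * (g' q.1 * B.indicator 1 (f q)) := by
        have liftae2 : ∀ᵐ q ∂(μ.prod μ), h q.2 + h' q.2 = 2 := by
          have hmeas : MeasurableSet {q : X × X | h q.2 + h' q.2 = 2} :=
            ((hhm.comp measurable_snd).add (hh'm.comp measurable_snd)) (measurableSet_singleton 2)
          exact (Measure.ae_prod_iff_ae_ae (p := fun q : X × X => h q.2 + h' q.2 = 2) hmeas).mpr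
            (Filter.Eventually.of_forall fun x => hhh'.mono fun y hy => hy)
        refine liftae2.mono fun q hq => ?_
        show g' q.1 * h q.2 * B.indicator 1 (f q) + g' q.1 * h' q.2 * B.indicator 1 (f q)
            = 2 * (g' q.1 * B.indicator 1 (f q))
        have e : g' q.1 * h q.2 * B.indicator 1 (f q) + g' q.1 * h' q.2 * B.indicator 1 (f q)
            = (h q.2 + h' q.2) * (g' q.1 * B.indicator 1 (f q)) := by ring
        rw [e, hq]
      rw [lintegral_congr_ae hcong,
        lintegral_const_mul 2 (show Measurable fun q : X × X =>
          g' q.1 * B.indicator 1 (f q) from (hg'm.comp measurable_fst).mul indm)]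
      rw [myAux_keyA μ hf h1 hg'm hB, hg'int, one_mul, ← hn]
    -- conclude by cancellation
    have hfin : I g' h ≠ ∞ := by
      refine ne_top_of_le_ne_top ?_ (le_add_left le_rfl : I g' h ≤ I g h + I g' h)
      rw [step1]
      exact ENNReal.mul_ne_top (by norm_num) (measure_ne_top _ _)
    have : I g' h + I g h = I g' h + I g' h' := by
      rw [add_comm (I g' h) (I g h), step1, step2]
    exact (ENNReal.add_right_inj hfin).mp this
  · -- (Hex'') → (Ind)
    intro H
    have key : ∀ (A : Set X), MeasurableSet A → ∀ (B : Set M), MeasurableSet B →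
        ∀ proj : X × X → X, (proj = Prod.fst ∨ proj = Prod.snd) →
        (μ.prod μ) (proj ⁻¹' A ∩ f ⁻¹' B) = μ A * (Measure.map f (μ.prod μ)) B := by
      intro A hA B hB proj hproj
      set a := μ A with ha
      have ha1 : a ≤ 1 := prob_le_one
      set g : X → ℝ≥0∞ := fun x => A.indicator 1 x + (1 - a) with hgdef
      set h : X → ℝ≥0∞ := fun x => Aᶜ.indicator 1 x + a with hhdef
      have hgm : Measurable g := (measurable_one.indicator hA).add measurable_const
      have hhm : Measurable h := (measurable_one.indicator hA.compl).add measurable_const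
      have hgint : ∫⁻ x, g x ∂μ = 1 := by
        rw [hgdef]
        simp only []
        rw [lintegral_add_left (measurable_one.indicator hA), lintegral_indicator_one hA,
          lintegral_const, measure_univ, mul_one, ← ha, add_tsub_cancel_of_le ha1]
      have hhint : ∫⁻ x, h x ∂μ = 1 := by
        rw [hhdef]
        simp only []
        rw [lintegral_add_left (measurable_one.indicator hA.compl),
          lintegral_indicator_one hA.compl, lintegral_const, measure_univ, mul_one,
          prob_compl_eq_one_sub hA, ← ha, tsub_add_cancel_of_le ha1]
      have hprob : ∀ (k : X → ℝ≥0∞), Measurable k → ∫⁻ x, k x ∂μ = 1 →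
          IsProbabilityMeasure (μ.withDensity k) := by
        intro k hk hkint
        constructor
        rw [withDensity_apply _ MeasurableSet.univ, setLIntegral_univ, hkint]
      have hsum : μ.withDensity g + μ.withDensity h = (2 : ℝ≥0∞) • μ := by
        rw [← withDensity_add_left hgm, ← withDensity_const (2 : ℝ≥0∞)]
        apply withDensity_congr_ae
        refine Filter.Eventually.of_forall fun x => ?_
        show A.indicator 1 x + (1 - a) + (Aᶜ.indicator 1 x + a) = 2
        have h1 : A.indicator (1 : X → ℝ≥0∞) x + Aᶜ.indicator 1 x = 1 := by
          by_cases hx : x ∈ A <;> simp [hx]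
        have h2 : (1 - a) + a = 1 := tsub_add_cancel_of_le ha1
        calc A.indicator 1 x + (1 - a) + (Aᶜ.indicator 1 x + a)
            = (A.indicator 1 x + Aᶜ.indicator 1 x) + ((1 - a) + a) := by ring
          _ = 1 + 1 := by rw [h1, h2]
          _ = 2 := by norm_num
      haveI hg_prob : IsProbabilityMeasure (μ.withDensity g) := hprob g hgm hgint
      haveI hh_prob : IsProbabilityMeasure (μ.withDensity h) := hprob h hhm hhint
      have h2μ : μ + μ = (2 : ℝ≥0∞) • μ := by rw [two_smul]
      -- apply Hex'' with the appropriate pair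
      have hH : Measure.map f ((μ.withDensity g).prod μ) = Measure.map f ((μ.withDensity h).prod μ)
          ∧ Measure.map f (μ.prod (μ.withDensity g)) = Measure.map f (μ.prod (μ.withDensity h)) :=
        ⟨H _ _ μ μ hg_prob hh_prob inferInstance inferInstance hsum h2μ,
         H μ μ _ _ inferInstance inferInstance hg_prob hh_prob h2μ hsum⟩
      set E := f ⁻¹' B with hE
      have hEm : MeasurableSet E := hf hB
      set m := μ.prod μ with hm
      set n := (Measure.map f (μ.prod μ)) B with hn
      have hnm : n = m E := by rw [hn, Measure.map_apply hf hB]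
      -- the two density computations
      have eval : ∀ (k : X → ℝ≥0∞), Measurable k → SigmaFinite (μ.withDensity k) →
          ((μ.withDensity k).prod μ E = ∫⁻ q in E, k q.1 ∂m
            ∧ μ.prod (μ.withDensity k) E = ∫⁻ q in E, k q.2 ∂m) := by
        intro k hk hsf
        haveI := hsf
        constructor
        · have h1 : (μ.withDensity k).prod μ = (μ.withDensity k).prod (μ.withDensity 1) := by
            rw [withDensity_one]
          haveI : SigmaFinite (μ.withDensity (1 : X → ℝ≥0∞)) := by
            rw [withDensity_one]; infer_instance
          rw [h1, myAux_prod_withDensity μ μ hk measurable_one, withDensity_apply _ hEm]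
          simp [hm]
        · have h1 : μ.prod (μ.withDensity k) = (μ.withDensity 1).prod (μ.withDensity k) := by
            rw [withDensity_one]
          haveI : SigmaFinite (μ.withDensity (1 : X → ℝ≥0∞)) := by
            rw [withDensity_one]; infer_instance
          rw [h1, myAux_prod_withDensity μ μ measurable_one hk, withDensity_apply _ hEm]
          simp [hm]
      -- pick the relevant coordinate
      obtain hproj | hproj := hproj
      · -- first coordinate
        subst hproj
        have hgE := (eval g hgm inferInstance).1
        have hhE := (eval h hhm inferInstance).1
        have hmain : ∫⁻ q in E, g q.1 ∂m = ∫⁻ q in E, h q.1 ∂m := by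
          rw [← hgE, ← hhE]
          have := congrArg (fun ρ : Measure M => ρ B) hH.1
          simpa only [Measure.map_apply hf hB] using this
        -- expand both sides
        set u := m (E ∩ Prod.fst ⁻¹' A) with hu
        have hAq : ∀ q : X × X, A.indicator (1 : X → ℝ≥0∞) q.1
            = (Prod.fst ⁻¹' A).indicator (1 : X × X → ℝ≥0∞) q := by
          intro q; by_cases hq : q.1 ∈ A <;> simp [Set.indicator_apply, hq]
        have hgexp : ∫⁻ q in E, g q.1 ∂m = u + (1 - a) * n := by
          show ∫⁻ q in E, (A.indicator 1 q.1 + (1 - a)) ∂m = _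
          rw [lintegral_add_right _ measurable_const, setLIntegral_const]
          congr 1
          · simp only [hAq]
            rw [lintegral_indicator_one (measurable_fst hA),
              Measure.restrict_apply (measurable_fst hA), hu, Set.inter_comm]
          · rw [hnm]
        have hhexp : ∫⁻ q in E, h q.1 ∂m = (n - u) + a * n := by
          show ∫⁻ q in E, (Aᶜ.indicator 1 q.1 + a) ∂m = _
          rw [lintegral_add_right _ measurable_const, setLIntegral_const]
          congr 1
          · have hAq' : ∀ q : X × X, Aᶜ.indicator (1 : X → ℝ≥0∞) q.1
                = (Prod.fst ⁻¹' Aᶜ).indicator (1 : X × X → ℝ≥0∞) q := by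
              intro q; by_cases hq : q.1 ∈ A <;>
                simp [Set.indicator_apply, Set.mem_preimage, Set.mem_compl_iff, hq]
            simp only [hAq']
            rw [lintegral_indicator_one (measurable_fst hA.compl),
              Measure.restrict_apply (measurable_fst hA.compl)]
            have : Prod.fst ⁻¹' Aᶜ ∩ E = E \ (Prod.fst ⁻¹' A) := by
              ext q; simp [Set.mem_diff, and_comm]
            rw [this, hnm, hu, ← measure_inter_add_diff E (measurable_fst hA)]
            exact (ENNReal.add_sub_cancel_left (measure_ne_top m _)).symm
          · rw [hnm]
        rw [hgexp, hhexp] at hmain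
        -- solve : u + (1-a)*n = (n-u)+a*n  →  u = a * n
        have huE : u ≤ n := by
          rw [hnm, hu]; exact measure_mono Set.inter_subset_left
        have hufin : u ≠ ∞ := measure_ne_top m _
        have hnfin : n ≠ ∞ := measure_ne_top _ _
        have keyeq : 2 * u = 2 * (a * n) := by
          have e1 : u + (1 - a) * n + (a * n + u) = (n - u) + a * n + (a * n + u) := by
            rw [hmain]
          have e2 : (1 - a) * n + a * n = n := by
            rw [← add_mul, tsub_add_cancel_of_le ha1, one_mul]
          have e3 : (n - u) + u = n := tsub_add_cancel_of_le huE
          calc 2 * u = u + u := two_mul u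
            _ = (u + (1 - a) * n + (a * n + u)) - ((1 - a) * n + a * n) := by
                have : u + (1 - a) * n + (a * n + u) = (u + u) + ((1 - a) * n + a * n) := by ring
                rw [this, e2, ENNReal.add_sub_cancel_right hnfin]
            _ = ((n - u) + a * n + (a * n + u)) - ((1 - a) * n + a * n) := by rw [e1]
            _ = 2 * (a * n) := by
                rw [e2]
                have : (n - u) + a * n + (a * n + u) = ((n - u) + u) + (a * n + a * n) := by ring
                rw [this, e3, ← two_mul, add_comm, ENNReal.add_sub_cancel_right hnfin]
        have := (ENNReal.mul_right_inj (by norm_num) (by norm_num)).mp keyeq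
        rw [Set.inter_comm] at hu
        rw [← hu, this]
      · -- second coordinate
        subst hproj
        have hgE := (eval g hgm inferInstance).2
        have hhE := (eval h hhm inferInstance).2
        have hmain : ∫⁻ q in E, g q.2 ∂m = ∫⁻ q in E, h q.2 ∂m := by
          rw [← hgE, ← hhE]
          have := congrArg (fun ρ : Measure M => ρ B) hH.2
          simpa only [Measure.map_apply hf hB] using this
        set u := m (E ∩ Prod.snd ⁻¹' A) with hu
        have hAq : ∀ q : X × X, A.indicator (1 : X → ℝ≥0∞) q.2
            = (Prod.snd ⁻¹' A).indicator (1 : X × X → ℝ≥0∞) q := by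
          intro q; by_cases hq : q.2 ∈ A <;> simp [Set.indicator_apply, hq]
        have hgexp : ∫⁻ q in E, g q.2 ∂m = u + (1 - a) * n := by
          show ∫⁻ q in E, (A.indicator 1 q.2 + (1 - a)) ∂m = _
          rw [lintegral_add_right _ measurable_const, setLIntegral_const]
          congr 1
          · simp only [hAq]
            rw [lintegral_indicator_one (measurable_snd hA),
              Measure.restrict_apply (measurable_snd hA), hu, Set.inter_comm]
          · rw [hnm]
        have hhexp : ∫⁻ q in E, h q.2 ∂m = (n - u) + a * n := by
          show ∫⁻ q in E, (Aᶜ.indicator 1 q.2 + a) ∂m = _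
          rw [lintegral_add_right _ measurable_const, setLIntegral_const]
          congr 1
          · have hAq' : ∀ q : X × X, Aᶜ.indicator (1 : X → ℝ≥0∞) q.2
                = (Prod.snd ⁻¹' Aᶜ).indicator (1 : X × X → ℝ≥0∞) q := by
              intro q; by_cases hq : q.2 ∈ A <;>
                simp [Set.indicator_apply, Set.mem_preimage, Set.mem_compl_iff, hq]
            simp only [hAq']
            rw [lintegral_indicator_one (measurable_snd hA.compl),
              Measure.restrict_apply (measurable_snd hA.compl)]
            have : Prod.snd ⁻¹' Aᶜ ∩ E = E \ (Prod.snd ⁻¹' A) := by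
              ext q; simp [Set.mem_diff, and_comm]
            rw [this, hnm, hu, ← measure_inter_add_diff E (measurable_snd hA)]
            exact (ENNReal.add_sub_cancel_left (measure_ne_top m _)).symm
          · rw [hnm]
        rw [hgexp, hhexp] at hmain
        have huE : u ≤ n := by
          rw [hnm, hu]; exact measure_mono Set.inter_subset_left
        have hnfin : n ≠ ∞ := measure_ne_top _ _
        have keyeq : 2 * u = 2 * (a * n) := by
          have e1 : u + (1 - a) * n + (a * n + u) = (n - u) + a * n + (a * n + u) := by
            rw [hmain]
          have e2 : (1 - a) * n + a * n = n := by
            rw [← add_mul, tsub_add_cancel_of_le ha1, one_mul]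
          have e3 : (n - u) + u = n := tsub_add_cancel_of_le huE
          calc 2 * u = u + u := two_mul u
            _ = (u + (1 - a) * n + (a * n + u)) - ((1 - a) * n + a * n) := by
                have : u + (1 - a) * n + (a * n + u) = (u + u) + ((1 - a) * n + a * n) := by ring
                rw [this, e2, ENNReal.add_sub_cancel_right hnfin]
            _ = ((n - u) + a * n + (a * n + u)) - ((1 - a) * n + a * n) := by rw [e1]
            _ = 2 * (a * n) := by
                rw [e2]
                have : (n - u) + a * n + (a * n + u) = ((n - u) + u) + (a * n + a * n) := by ring
                rw [this, e3, ← two_mul, add_comm, ENNReal.add_sub_cancel_right hnfin]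
        have := (ENNReal.mul_right_inj (by norm_num) (by norm_num)).mp keyeq
        rw [Set.inter_comm] at hu
        rw [← hu, this]
    constructor
    · refine (Measure.prod_eq fun A B hA hB => ?_).symm
      rw [Measure.map_apply (measurable_fst.prodMk hf) (hA.prod hB)]
      have hpre : (fun q : X × X => (q.1, f q)) ⁻¹' (A ×ˢ B) = Prod.fst ⁻¹' A ∩ f ⁻¹' B := by
        ext q; simp [Set.mem_prod]
      rw [hpre]
      exact key A hA B hB Prod.fst (Or.inl rfl)
    · refine (Measure.prod_eq fun A B hA hB => ?_).symm
      rw [Measure.map_apply (measurable_snd.prodMk hf) (hA.prod hB)]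
      have hpre : (fun q : X × X => (q.2, f q)) ⁻¹' (A ×ˢ B) = Prod.snd ⁻¹' A ∩ f ⁻¹' B := by
        ext q; simp [Set.mem_prod]
      rw [hpre]
      exact key A hA B hB Prod.snd (Or.inr rfl)
end

section
/- Let n be a positive integer and let A, B be subsets of ℤ/nℤ. Then the map A × B → ℤ/nℤ, (a,b) ↦ a + b, is a bijection (i.e., ℤ/nℤ = A ⊕ B) if and only if Z_A ∪ Z_B = (ℤ/nℤ) \ {0} and |A| · |B| = n, where for a subset S ⊆ ℤ/nℤ, Z_S denotes the set of t ∈ ℤ/nℤ such that F_S(t) = 0, with F_S(t) = Σ_{k ∈ S} exp(−2πi·k·t/n) the discrete Fourier transform of the characteristic function of S. -/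
open scoped BigOperators

/-- The discrete Fourier transform of the characteristic function of a subset `S` of
`ℤ/nℤ`: `F_S(t) = ∑_{k ∈ S} exp(-2πi·k·t/n)`. -/
noncomputable def dft (n : ℕ) (S : Finset (ZMod n)) (t : ZMod n) : ℂ :=
  ∑ k ∈ S, Complex.exp (-(2 * (Real.pi : ℂ) * Complex.I * (k.val : ℂ) * (t.val : ℂ)) / (n : ℂ))

section aux

open Finset AddChar ZMod

variable {n : ℕ} [NeZero n]

lemma dft_eq_char (S : Finset (ZMod n)) (t : ZMod n) :
    dft n S t = ∑ k ∈ S, ZMod.stdAddChar (-(k * t)) := by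
  refine Finset.sum_congr rfl fun k _ => ?_
  have h : (-(k * t) : ZMod n) = (((-(k.val * t.val : ℤ)) : ℤ) : ZMod n) := by
    push_cast [ZMod.natCast_val, ZMod.cast_id']
    ring
  rw [h, ZMod.stdAddChar_coe]
  congr 1
  push_cast
  ring

lemma dft_eq_fourier (S : Finset (ZMod n)) (t : ZMod n) :
    dft n S t = ZMod.dft (fun j => if j ∈ S then (1 : ℂ) else 0) t := by
  rw [dft_eq_char, ZMod.dft_apply]
  simp only [smul_eq_mul, mul_ite, mul_one, mul_zero]
  rw [Finset.sum_ite_mem, Finset.univ_inter]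

lemma dft_zero_eq (S : Finset (ZMod n)) : dft n S 0 = (S.card : ℂ) := by
  rw [dft_eq_char]
  simp

lemma fourier_const (t : ZMod n) :
    ZMod.dft (fun _ : ZMod n => (1 : ℂ)) t = if t = 0 then (n : ℂ) else 0 := by
  rw [ZMod.dft_apply]
  simp only [smul_eq_mul, mul_one]
  have h : ∀ j : ZMod n, -(j * t) = (-t) * j := fun j => by ring
  simp_rw [h]
  split_ifs with ht
  · simp [ht, Finset.card_univ, ZMod.card]
  · exact AddChar.sum_eq_zero_of_ne_one (ZMod.isPrimitive_stdAddChar n (neg_ne_zero.mpr ht))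

lemma fourier_conv (A B : Finset (ZMod n)) (t : ZMod n) :
    ZMod.dft (fun x : ZMod n =>
        (((A ×ˢ B).filter (fun p => p.1 + p.2 = x)).card : ℂ)) t
      = dft n A t * dft n B t := by
  rw [ZMod.dft_apply]
  simp only [smul_eq_mul]
  have h1 : ∀ x : ZMod n,
      ZMod.stdAddChar (-(x * t)) * ((((A ×ˢ B).filter (fun p => p.1 + p.2 = x)).card : ℂ))
        = ∑ p ∈ (A ×ˢ B).filter (fun p => p.1 + p.2 = x),
            ZMod.stdAddChar (-((p.1 + p.2) * t)) := by
    intro x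
    rw [Finset.sum_congr rfl (fun p hp => by
      rw [(Finset.mem_filter.mp hp).2]), Finset.sum_const, nsmul_eq_mul, mul_comm]
  simp_rw [h1]
  rw [Finset.sum_fiberwise (A ×ˢ B) (fun p => p.1 + p.2)
    (fun p => ZMod.stdAddChar (-((p.1 + p.2) * t)))]
  have h2 : ∀ p : ZMod n × ZMod n, ZMod.stdAddChar (-((p.1 + p.2) * t))
      = ZMod.stdAddChar (-(p.1 * t)) * ZMod.stdAddChar (-(p.2 * t)) := by
    intro p
    rw [← AddChar.map_add_eq_mul]
    congr 1
    ring
  simp_rw [h2]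
  rw [dft_eq_char, dft_eq_char, Finset.sum_mul_sum, Finset.sum_product]

lemma bij_iff (A B : Finset (ZMod n)) :
    Function.Bijective (fun q : A × B => (q.1 : ZMod n) + (q.2 : ZMod n)) ↔
      ∀ x : ZMod n, ((A ×ˢ B).filter (fun p => p.1 + p.2 = x)).card = 1 := by
  rw [Function.bijective_iff_existsUnique]
  refine forall_congr' fun x => ?_
  rw [Finset.card_eq_one]
  constructor
  · rintro ⟨⟨a, b⟩, hq, huniq⟩
    refine ⟨((a : ZMod n), (b : ZMod n)), ?_⟩
    ext p
    simp only [Finset.mem_filter, Finset.mem_product, Finset.mem_singleton]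
    constructor
    · rintro ⟨⟨ha, hb⟩, hsum⟩
      have := huniq (⟨p.1, ha⟩, ⟨p.2, hb⟩) hsum
      rw [Prod.ext_iff] at this
      obtain ⟨h1, h2⟩ := this
      exact Prod.ext (congrArg Subtype.val h1) (congrArg Subtype.val h2)
    · rintro rfl
      exact ⟨⟨a.2, b.2⟩, hq⟩
  · rintro ⟨p, hp⟩
    have hmem : p ∈ (A ×ˢ B).filter (fun p => p.1 + p.2 = x) := by
      rw [hp]; exact Finset.mem_singleton_self p
    rw [Finset.mem_filter, Finset.mem_product] at hmem
    obtain ⟨⟨ha, hb⟩, hsum⟩ := hmem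
    refine ⟨(⟨p.1, ha⟩, ⟨p.2, hb⟩), hsum, ?_⟩
    rintro ⟨a, b⟩ h
    have hm : (((a : ZMod n), (b : ZMod n)) : ZMod n × ZMod n)
        ∈ (A ×ˢ B).filter (fun p => p.1 + p.2 = x) := by
      rw [Finset.mem_filter, Finset.mem_product]
      exact ⟨⟨a.2, b.2⟩, h⟩
    rw [hp, Finset.mem_singleton, Prod.ext_iff] at hm
    exact Prod.ext (Subtype.ext hm.1) (Subtype.ext hm.2)

end aux

/-- `ℤ/nℤ = A ⊕ B` (i.e., `(a,b) ↦ a + b` is a bijection from `A × B` to `ℤ/nℤ`)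
if and only if `Z_A ∪ Z_B = ℤ/nℤ \ {0}` and `|A|·|B| = n`, where `Z_S` is the zero set
of the discrete Fourier transform of the characteristic function of `S`. -/
theorem stmt7 (n : ℕ) (hn : 0 < n) (A B : Finset (ZMod n)) :
    Function.Bijective (fun q : A × B => (q.1 : ZMod n) + (q.2 : ZMod n)) ↔
      ({t : ZMod n | dft n A t = 0} ∪ {t : ZMod n | dft n B t = 0} = {(0 : ZMod n)}ᶜ ∧
        A.card * B.card = n) := by
  haveI : NeZero n := ⟨hn.ne'⟩
  rw [bij_iff]
  have key : (∀ x : ZMod n, ((A ×ˢ B).filter (fun p => p.1 + p.2 = x)).card = 1) ↔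
      ∀ t : ZMod n, dft n A t * dft n B t = if t = 0 then (n : ℂ) else 0 := by
    have step1 : (∀ x : ZMod n, ((A ×ˢ B).filter (fun p => p.1 + p.2 = x)).card = 1) ↔
        (fun x : ZMod n => ((((A ×ˢ B).filter (fun p => p.1 + p.2 = x)).card : ℂ)))
          = (fun _ : ZMod n => (1 : ℂ)) := by
      rw [funext_iff]
      refine forall_congr' fun x => ?_
      exact_mod_cast Iff.rfl
    rw [step1, ← ZMod.dft.injective.eq_iff, funext_iff]
    refine forall_congr' fun t => ?_
    rw [fourier_conv, fourier_const]
  rw [key]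
  constructor
  · intro h
    have h0 := h 0
    rw [if_pos rfl, dft_zero_eq, dft_zero_eq] at h0
    have hcard : A.card * B.card = n := by exact_mod_cast h0
    have hA : A.card ≠ 0 := by
      intro h'
      rw [h', zero_mul] at hcard
      omega
    have hB : B.card ≠ 0 := by
      intro h'
      rw [h', mul_zero] at hcard
      omega
    refine ⟨?_, hcard⟩
    ext t
    simp only [Set.mem_union, Set.mem_setOf_eq, Set.mem_compl_iff, Set.mem_singleton_iff]
    constructor
    · rintro (h1 | h1) rfl <;> rw [dft_zero_eq] at h1
      · exact hA (by exact_mod_cast h1)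
      · exact hB (by exact_mod_cast h1)
    · intro ht
      have := h t
      rw [if_neg ht] at this
      exact mul_eq_zero.mp this
  · rintro ⟨hset, hcard⟩ t
    by_cases ht : t = 0
    · subst ht
      rw [if_pos rfl, dft_zero_eq, dft_zero_eq]
      exact_mod_cast hcard
    · rw [if_neg ht]
      have hmem : t ∈ ({t : ZMod n | dft n A t = 0} ∪ {t : ZMod n | dft n B t = 0}) := by
        rw [hset]; exact ht
      rcases hmem with h | h
      · exact mul_eq_zero.mpr (Or.inl h)
      · exact mul_eq_zero.mpr (Or.inr h)
end

section
/- Let (X₁, d₁, μ₁) and (X₂, d₂, μ₂) be metric spaces with Borel measures each satisfying the constant volume condition, and let p ≥ 1 be a real number. Define on X = X₁ × X₂ the distance d((x₁,x₂),(y₁,y₂)) = (d₁(x₁,y₁)^p + d₂(x₂,y₂)^p)^{1/p} and the product measure μ = μ₁ × μ₂. Then (X, d, μ) satisfies the constant volume condition. -/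
open MeasureTheory Metric
open scoped ENNReal

/-- Key lemma: a "sublevel set of `dist ^ p`" has center-independent measure
under the constant volume condition. -/
theorem cvc_aux {X : Type*} [MetricSpace X] [MeasurableSpace X]
    (μ : Measure X)
    (h : ∀ x y : X, ∀ r : ℝ, 0 ≤ r → μ (closedBall x r) = μ (closedBall y r))
    (p : ℝ) (hp : 0 < p) (a b : X) (c : ℝ) :
    μ {z : X | dist a z ^ p ≤ c} = μ {z : X | dist b z ^ p ≤ c} := by
  rcases lt_or_ge c 0 with hc | hc
  · have e : ∀ x : X, {z : X | dist x z ^ p ≤ c} = (∅ : Set X) := by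
      intro x
      ext z
      simp only [Set.mem_setOf_eq, Set.mem_empty_iff_false, iff_false, not_le]
      exact lt_of_lt_of_le hc (Real.rpow_nonneg dist_nonneg p)
    rw [e a, e b]
  · have e : ∀ x : X, {z : X | dist x z ^ p ≤ c} = closedBall x (c ^ (1/p)) := by
      intro x
      ext z
      simp only [Set.mem_setOf_eq, mem_closedBall, dist_comm z x]
      rw [one_div, Real.le_rpow_inv_iff_of_pos dist_nonneg hc hp]
    rw [e a, e b]
    exact h a b _ (Real.rpow_nonneg hc _)

/-- **Products of CVC spaces (ℓᵖ distance).**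
If `(X₁, d₁, μ₁)` and `(X₂, d₂, μ₂)` satisfy the constant volume condition and `p ≥ 1`,
then `X₁ × X₂` with the distance `d((x₁,x₂),(y₁,y₂)) = (d₁(x₁,y₁)^p + d₂(x₂,y₂)^p)^(1/p)`
and the product measure `μ₁ × μ₂` satisfies the constant volume condition. -/
theorem stmt11 {X₁ X₂ : Type*} [MetricSpace X₁] [MetricSpace X₂]
    [MeasurableSpace X₁] [MeasurableSpace X₂] [BorelSpace X₁] [BorelSpace X₂]
    (μ₁ : Measure X₁) (μ₂ : Measure X₂) [SFinite μ₁] [SFinite μ₂]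
    (h₁ : ∀ x y : X₁, ∀ r : ℝ, 0 ≤ r → μ₁ (closedBall x r) = μ₁ (closedBall y r))
    (h₂ : ∀ x y : X₂, ∀ r : ℝ, 0 ≤ r → μ₂ (closedBall x r) = μ₂ (closedBall y r))
    (p : ℝ) (hp : 1 ≤ p)
    (d : (X₁ × X₂) → (X₁ × X₂) → ℝ)
    (hd : ∀ a b : X₁ × X₂, d a b = (dist a.1 b.1 ^ p + dist a.2 b.2 ^ p) ^ (1 / p)) :
    ∀ (a b : X₁ × X₂) (r : ℝ), 0 ≤ r →
      (μ₁.prod μ₂) {z : X₁ × X₂ | d a z ≤ r} = (μ₁.prod μ₂) {z : X₁ × X₂ | d b z ≤ r} := by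
  intro a b r hr
  have hp0 : 0 < p := lt_of_lt_of_le one_pos hp
  -- rewrite the sets
  have hset : ∀ c : X₁ × X₂,
      {z : X₁ × X₂ | d c z ≤ r} =
      {z : X₁ × X₂ | dist c.1 z.1 ^ p + dist c.2 z.2 ^ p ≤ r ^ p} := by
    intro c
    ext z
    simp only [Set.mem_setOf_eq, hd]
    rw [one_div, Real.rpow_inv_le_iff_of_pos (by positivity) hr hp0]
  -- measurability of the sets
  have hmeas : ∀ c : X₁ × X₂,
      MeasurableSet {z : X₁ × X₂ | dist c.1 z.1 ^ p + dist c.2 z.2 ^ p ≤ r ^ p} := by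
    intro c
    have : Measurable fun z : X₁ × X₂ => dist c.1 z.1 ^ p + dist c.2 z.2 ^ p := by
      apply Measurable.add
      · exact (((continuous_const.dist continuous_id).rpow_const
          (fun _ => Or.inr hp0.le)).measurable).comp measurable_fst
      · exact (((continuous_const.dist continuous_id).rpow_const
          (fun _ => Or.inr hp0.le)).measurable).comp measurable_snd
    exact this measurableSet_Iic
  rw [hset a, hset b]
  -- step 1: change first coordinate, slicing along the second
  have step1 : (μ₁.prod μ₂) {z : X₁ × X₂ | dist a.1 z.1 ^ p + dist a.2 z.2 ^ p ≤ r ^ p}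
      = (μ₁.prod μ₂) {z : X₁ × X₂ | dist b.1 z.1 ^ p + dist a.2 z.2 ^ p ≤ r ^ p} := by
    rw [Measure.prod_apply_symm (hmeas a), Measure.prod_apply_symm (hmeas (b.1, a.2))]
    apply lintegral_congr
    intro y
    have e : ∀ x₁ : X₁, ((fun x => (x, y)) ⁻¹'
        {z : X₁ × X₂ | dist x₁ z.1 ^ p + dist a.2 z.2 ^ p ≤ r ^ p})
        = {x : X₁ | dist x₁ x ^ p ≤ r ^ p - dist a.2 y ^ p} := by
      intro x₁; ext x
      simp only [Set.mem_preimage, Set.mem_setOf_eq]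
      constructor <;> intro h <;> linarith
    rw [e a.1, e b.1]
    exact cvc_aux μ₁ h₁ p hp0 a.1 b.1 _
  rw [step1]
  -- step 2: change second coordinate, slicing along the first
  rw [Measure.prod_apply (hmeas (b.1, a.2)), Measure.prod_apply (hmeas b)]
  apply lintegral_congr
  intro x
  have e : ∀ x₂ : X₂, (Prod.mk x ⁻¹'
      {z : X₁ × X₂ | dist b.1 z.1 ^ p + dist x₂ z.2 ^ p ≤ r ^ p})
      = {y : X₂ | dist x₂ y ^ p ≤ r ^ p - dist b.1 x ^ p} := by
    intro x₂; ext y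
    simp only [Set.mem_preimage, Set.mem_setOf_eq]
    constructor <;> intro h <;> linarith
  rw [e a.2, e b.2]
  exact cvc_aux μ₂ h₂ p hp0 a.2 b.2 _
end

section
/- Let (X₁, d₁, μ₁) and (X₂, d₂, μ₂) be bounded metric spaces with Borel probability measures, each satisfying the constant volume condition with the same volume function ρ (i.e., μᵢ(B̄(x,r)) = ρ(r) for every i ∈ {1,2}, x ∈ Xᵢ, r ≥ 0). Let L ≥ 0 and let X = X₁ ⊔ X₂ be the disjoint union, with measure μ = (1/2)(μ₁ + μ₂) (each μᵢ pushed forward along the canonical inclusion) and with d(x,y) = dᵢ(x,y) if x, y both lie in Xᵢ for some i, and d(x,y) = L if x and y lie in different parts. Then for every x, y ∈ X and every r ≥ 0, μ({z ∈ X : d(x,z) ≤ r}) = μ({z ∈ X : d(y,z) ≤ r}); moreover, if the diameter of each Xᵢ is at most 2L, then d satisfies the triangle inequality on X. -/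
open MeasureTheory Metric
open scoped ENNReal

/-- The distance on the disjoint union `X₁ ⊔ X₂`: within each part it is the original
distance, and points in different parts are at distance `L`. -/
noncomputable def sumDist {X₁ X₂ : Type*} [Dist X₁] [Dist X₂] (L : ℝ) :
    X₁ ⊕ X₂ → X₁ ⊕ X₂ → ℝ
  | Sum.inl a, Sum.inl b => dist a b
  | Sum.inr a, Sum.inr b => dist a b
  | Sum.inl _, Sum.inr _ => L
  | Sum.inr _, Sum.inl _ => L

/-- **Union of two spaces with the same constant volume function.**
If two bounded metric probability spaces satisfy the constant volume condition with the
same volume function `ρ`, then their disjoint union, with measure `(1/2)(μ₁ + μ₂)` and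
with distance `L ≥ 0` between the two parts, satisfies the constant volume condition;
moreover, if both parts have diameter at most `2L`, the triangle inequality holds. -/
theorem stmt12 {X₁ X₂ : Type*} [MetricSpace X₁] [MetricSpace X₂]
    [MeasurableSpace X₁] [MeasurableSpace X₂] [BorelSpace X₁] [BorelSpace X₂]
    (μ₁ : Measure X₁) (μ₂ : Measure X₂)
    [IsProbabilityMeasure μ₁] [IsProbabilityMeasure μ₂]
    (hb₁ : Bornology.IsBounded (Set.univ : Set X₁))
    (hb₂ : Bornology.IsBounded (Set.univ : Set X₂))
    (ρ : ℝ → ℝ≥0∞)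
    (h₁ : ∀ (x : X₁) (r : ℝ), 0 ≤ r → μ₁ (closedBall x r) = ρ r)
    (h₂ : ∀ (x : X₂) (r : ℝ), 0 ≤ r → μ₂ (closedBall x r) = ρ r)
    (L : ℝ) (hL : 0 ≤ L)
    (μ : Measure (X₁ ⊕ X₂))
    (hμ : μ = (2 : ℝ≥0∞)⁻¹ • (Measure.map Sum.inl μ₁ + Measure.map Sum.inr μ₂)) :
    (∀ (x y : X₁ ⊕ X₂) (r : ℝ), 0 ≤ r →
        μ {z : X₁ ⊕ X₂ | sumDist L x z ≤ r} = μ {z : X₁ ⊕ X₂ | sumDist L y z ≤ r}) ∧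
      ((Metric.diam (Set.univ : Set X₁) ≤ 2 * L ∧ Metric.diam (Set.univ : Set X₂) ≤ 2 * L) →
        ∀ a b c : X₁ ⊕ X₂, sumDist L a c ≤ sumDist L a b + sumDist L b c) := by
  constructor
  · have key : ∀ (x : X₁ ⊕ X₂) (r : ℝ), 0 ≤ r →
        μ {z : X₁ ⊕ X₂ | sumDist L x z ≤ r}
          = (2 : ℝ≥0∞)⁻¹ * (ρ r + (if L ≤ r then 1 else 0)) := by
      intro x r hr
      obtain a | a := x
      · have hpre1 : Sum.inl ⁻¹' {z : X₁ ⊕ X₂ | sumDist L (Sum.inl a) z ≤ r}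
            = closedBall a r := by
          ext b; simp [sumDist, dist_comm, Metric.mem_closedBall]
        have hpre2 : Sum.inr ⁻¹' {z : X₁ ⊕ X₂ | sumDist L (Sum.inl a) z ≤ r}
            = (if L ≤ r then (Set.univ : Set X₂) else ∅) := by
          ext b; by_cases h : L ≤ r <;> simp [sumDist, h]
        have hS : MeasurableSet {z : X₁ ⊕ X₂ | sumDist L (Sum.inl a) z ≤ r} := by
          rw [measurableSet_sum_iff, hpre1, hpre2]
          refine ⟨measurableSet_closedBall, ?_⟩
          split <;> simp
        rw [hμ]
        simp only [Measure.smul_apply, Measure.add_apply, smul_eq_mul,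
          Measure.map_apply measurable_inl hS, Measure.map_apply measurable_inr hS,
          hpre1, hpre2, h₁ a r hr]
        congr 1
        split <;> simp
      · have hpre1 : Sum.inl ⁻¹' {z : X₁ ⊕ X₂ | sumDist L (Sum.inr a) z ≤ r}
            = (if L ≤ r then (Set.univ : Set X₁) else ∅) := by
          ext b; by_cases h : L ≤ r <;> simp [sumDist, h]
        have hpre2 : Sum.inr ⁻¹' {z : X₁ ⊕ X₂ | sumDist L (Sum.inr a) z ≤ r}
            = closedBall a r := by
          ext b; simp [sumDist, dist_comm, Metric.mem_closedBall]
        have hS : MeasurableSet {z : X₁ ⊕ X₂ | sumDist L (Sum.inr a) z ≤ r} := by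
          rw [measurableSet_sum_iff, hpre1, hpre2]
          refine ⟨?_, measurableSet_closedBall⟩
          split <;> simp
        rw [hμ]
        simp only [Measure.smul_apply, Measure.add_apply, smul_eq_mul,
          Measure.map_apply measurable_inl hS, Measure.map_apply measurable_inr hS,
          hpre1, hpre2, h₂ a r hr]
        have : μ₁ (if L ≤ r then (Set.univ : Set X₁) else ∅)
            = (if L ≤ r then (1 : ℝ≥0∞) else 0) := by split <;> simp
        rw [this]
        ring
    intro x y r hr
    rw [key x r hr, key y r hr]
  · rintro ⟨hd₁, hd₂⟩ a b c
    have key₁ : ∀ a c : X₁, dist a c ≤ 2 * L := fun a c =>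
      le_trans (dist_le_diam_of_mem hb₁ (Set.mem_univ a) (Set.mem_univ c)) hd₁
    have key₂ : ∀ a c : X₂, dist a c ≤ 2 * L := fun a c =>
      le_trans (dist_le_diam_of_mem hb₂ (Set.mem_univ a) (Set.mem_univ c)) hd₂
    obtain a | a := a <;> obtain b | b := b <;> obtain c | c := c <;>
      simp only [sumDist] <;>
      first
        | exact dist_triangle _ _ _
        | linarith [key₁ a c]
        | linarith [key₂ a c]
        | linarith [dist_nonneg (x := a) (y := b)]
        | linarith [dist_nonneg (x := b) (y := c)]
end

section
/- Let V = {1, …, N} be a finite set with a distance d₀ such that the counting-measure balls of d₀ have constant size, i.e., for all i, j ∈ V and r ≥ 0, |{k ∈ V : d₀(i,k) ≤ r}| = |{k ∈ V : d₀(j,k) ≤ r}|. For each i ∈ V let (Xᵢ, dᵢ, μᵢ) be a metric space with a Borel probability measure satisfying the constant volume condition, all with the same volume function ρ. On the disjoint union X = ⊔_{i=1}^N Xᵢ define the measure μ = (1/N) Σᵢ μᵢ (each μᵢ pushed forward along the canonical inclusion) and d(x,y) = dᵢ(x,y) if x, y ∈ Xᵢ, and d(x,y) = d₀(i,j) if x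 ∈ Xᵢ, y ∈ Xⱼ with i ≠ j. Then for every x, y ∈ X and every r ≥ 0, μ({z ∈ X : d(x,z) ≤ r}) = μ({z ∈ X : d(y,z) ≤ r}). -/
open MeasureTheory Metric
open scoped ENNReal BigOperators

/-- The distance on the disjoint union `⊔ᵢ Xᵢ` of metric spaces indexed by `Fin N`:
within a part it is the given distance, and `d(x,y) = d₀(i,j)` for `x ∈ Xᵢ`, `y ∈ Xⱼ`
with `i ≠ j`. -/
noncomputable def sigmaDist {N : ℕ} {X : Fin N → Type*} [∀ i, Dist (X i)]
    (d₀ : Fin N → Fin N → ℝ) (a b : Σ i, X i) : ℝ :=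
  if h : a.1 = b.1 then dist (cast (congrArg X h) a.2) b.2 else d₀ a.1 b.1

lemma measurableEmbedding_sigmaMk' {ι : Type*} {β : ι → Type*}
    [∀ i, MeasurableSpace (β i)] (i : ι) :
    MeasurableEmbedding (Sigma.mk i : β i → Σ j, β j) := by
  classical
  refine ⟨sigma_mk_injective, ?_, ?_⟩
  · exact Measurable.of_le_map (iInf_le _ i)
  · intro s hs
    rw [show (Sigma.instMeasurableSpace : MeasurableSpace (Σ j, β j))
      = ⨅ j, MeasurableSpace.map (Sigma.mk j) inferInstance from rfl,
      MeasurableSpace.measurableSet_iInf]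
    intro j
    show MeasurableSet (Sigma.mk j ⁻¹' (Sigma.mk i '' s))
    by_cases hij : j = i
    · subst hij
      have : Sigma.mk j ⁻¹' (Sigma.mk j '' s) = s :=
        Set.preimage_image_eq _ sigma_mk_injective
      rw [this]; exact hs
    · have : Sigma.mk j ⁻¹' (Sigma.mk i '' s) = ∅ := by
        ext z
        simp only [Set.mem_preimage, Set.mem_image, Set.mem_empty_iff_false, iff_false]
        rintro ⟨w, _, hw⟩
        exact hij (congrArg Sigma.fst hw).symm
      rw [this]; exact MeasurableSet.empty

/-- **Graphs whose points are replaced by metric spaces.**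
If the finite metric space `(Fin N, d₀)` has counting-measure balls of constant size and
each `(Xᵢ, dᵢ, μᵢ)` satisfies the constant volume condition with the same volume function
`ρ`, then the disjoint union with measure `(1/N) ∑ᵢ μᵢ` and the combined distance
satisfies the constant volume condition. -/
theorem stmt13 (N : ℕ) (hN : 0 < N) (d₀ : Fin N → Fin N → ℝ)
    (hd₀_self : ∀ i j : Fin N, d₀ i j = 0 ↔ i = j)
    (hd₀_symm : ∀ i j : Fin N, d₀ i j = d₀ j i)
    (hd₀_tri : ∀ i j k : Fin N, d₀ i k ≤ d₀ i j + d₀ j k)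
    (hd₀ : ∀ (i j : Fin N) (r : ℝ), 0 ≤ r →
      ({k : Fin N | d₀ i k ≤ r} : Set (Fin N)).ncard =
        ({k : Fin N | d₀ j k ≤ r} : Set (Fin N)).ncard)
    (X : Fin N → Type*) [∀ i, MetricSpace (X i)]
    [∀ i, MeasurableSpace (X i)] [∀ i, BorelSpace (X i)]
    (μ : ∀ i, Measure (X i)) [∀ i, IsProbabilityMeasure (μ i)]
    (ρ : ℝ → ℝ≥0∞)
    (h : ∀ (i : Fin N) (x : X i) (r : ℝ), 0 ≤ r → μ i (closedBall x r) = ρ r)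
    (ν : Measure (Σ i, X i))
    (hν : ν = (N : ℝ≥0∞)⁻¹ • ∑ i : Fin N, Measure.map (Sigma.mk i) (μ i)) :
    ∀ (x y : Σ i, X i) (r : ℝ), 0 ≤ r →
      ν {z : Σ i, X i | sigmaDist d₀ x z ≤ r} = ν {z : Σ i, X i | sigmaDist d₀ y z ≤ r} := by
  classical
  intro x y r hr
  have key : ∀ (i : Fin N) (xi : X i),
      ν {z : Σ k, X k | sigmaDist d₀ ⟨i, xi⟩ z ≤ r}
        = (N : ℝ≥0∞)⁻¹ *
          (ρ r + (((Finset.univ.filter fun k : Fin N => d₀ i k ≤ r).card - 1 : ℕ) : ℝ≥0∞)) := by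
    intro i xi
    rw [hν, Measure.smul_apply, Measure.finset_sum_apply, smul_eq_mul]
    congr 1
    have hmap : ∀ j : Fin N,
        Measure.map (Sigma.mk j) (μ j) {z : Σ k, X k | sigmaDist d₀ ⟨i, xi⟩ z ≤ r}
          = μ j (Sigma.mk j ⁻¹' {z : Σ k, X k | sigmaDist d₀ ⟨i, xi⟩ z ≤ r}) := fun j =>
      (measurableEmbedding_sigmaMk' j).map_apply _ _
    simp only [hmap]
    have hpre_same : Sigma.mk i ⁻¹' {z : Σ k, X k | sigmaDist d₀ ⟨i, xi⟩ z ≤ r}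
        = closedBall xi r := by
      ext z
      simp [sigmaDist, Metric.mem_closedBall, dist_comm]
    have hpre_ne : ∀ j : Fin N, j ≠ i →
        Sigma.mk j ⁻¹' {z : Σ k, X k | sigmaDist d₀ ⟨i, xi⟩ z ≤ r}
          = if d₀ i j ≤ r then Set.univ else ∅ := by
      intro j hj
      ext z
      simp only [Set.mem_preimage, Set.mem_setOf_eq, sigmaDist]
      rw [dif_neg (fun hij : i = j => hj hij.symm)]
      by_cases hd : d₀ i j ≤ r <;> simp [hd]
    rw [← Finset.add_sum_erase _ _ (Finset.mem_univ i), hpre_same, h i xi r hr]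
    congr 1
    have hsum : ∀ j ∈ Finset.univ.erase i,
        μ j (Sigma.mk j ⁻¹' {z : Σ k, X k | sigmaDist d₀ ⟨i, xi⟩ z ≤ r})
          = if d₀ i j ≤ r then (1 : ℝ≥0∞) else 0 := by
      intro j hj
      rw [hpre_ne j (Finset.mem_erase.1 hj).1]
      by_cases hd : d₀ i j ≤ r <;> simp [hd]
    rw [Finset.sum_congr rfl hsum, Finset.sum_boole]
    congr 1
    rw [Finset.filter_erase, Finset.card_erase_of_mem]
    exact Finset.mem_filter.2 ⟨Finset.mem_univ i, by rw [(hd₀_self i i).2 rfl]; exact hr⟩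
  obtain ⟨i, xi⟩ := x
  obtain ⟨j, yj⟩ := y
  rw [key i xi, key j yj]
  have hcard : ∀ k : Fin N, ({l : Fin N | d₀ k l ≤ r} : Set (Fin N)).ncard
      = (Finset.univ.filter fun l : Fin N => d₀ k l ≤ r).card := by
    intro k
    rw [Set.ncard_eq_toFinset_card']
    congr 1
    ext l
    simp
  have := hd₀ i j r hr
  rw [hcard i, hcard j] at this
  rw [this]
end

section
/- (Babbitt's hexachordal theorem.) Let A be a subset of ℤ/12ℤ with |A| = 6 and let A^c = (ℤ/12ℤ) \ A be its complement. Then for every k ∈ ℤ/12ℤ, the number of ordered pairs (x,y) ∈ A × A with y − x = k equals the number of ordered pairs (x,y) ∈ A^c × A^c with y − x = k; that is, every interval occurs with the same multiplicity in the hexachord A as in the complementary hexachord A^c. -/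
lemma pair_count (S : Finset (ZMod 12)) (k : ZMod 12) :
    ((S ×ˢ S).filter fun q => q.2 - q.1 = k).card =
      (S.filter fun x => x + k ∈ S).card := by
  apply Finset.card_bij (fun q _ => q.1)
  · rintro ⟨x, y⟩ hq
    simp only [Finset.mem_filter, Finset.mem_product] at hq ⊢
    obtain ⟨⟨hx, hy⟩, hk⟩ := hq
    have : y = x + k := by linear_combination hk
    exact ⟨hx, this ▸ hy⟩
  · rintro ⟨x, y⟩ hq ⟨x', y'⟩ hq' h
    simp only [Finset.mem_filter, Finset.mem_product] at hq hq'
    simp only at h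
    have : y = x + k := by linear_combination hq.2
    have : y' = x' + k := by linear_combination hq'.2
    simp_all
  · intro x hx
    simp only [Finset.mem_filter] at hx
    exact ⟨(x, x + k), by simp [Finset.mem_filter, hx.1, hx.2], rfl⟩

/-- **Babbitt's hexachordal theorem.**
For every hexachord `A ⊆ ℤ/12ℤ` (`|A| = 6`) and every interval `k ∈ ℤ/12ℤ`, the number
of ordered pairs `(x,y) ∈ A × A` with `y - x = k` equals the number of ordered pairs
`(x,y) ∈ Aᶜ × Aᶜ` with `y - x = k`. -/
theorem stmt18 (A : Finset (ZMod 12)) (hA : A.card = 6) (k : ZMod 12) :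
    ((A ×ˢ A).filter fun q => q.2 - q.1 = k).card =
      ((Aᶜ ×ˢ Aᶜ).filter fun q => q.2 - q.1 = k).card := by
  rw [pair_count, pair_count]
  set B : Finset (ZMod 12) := A.image (fun a => a - k) with hB
  have hmemB : ∀ x : ZMod 12, x ∈ B ↔ x + k ∈ A := by
    intro x
    simp only [hB, Finset.mem_image]
    constructor
    · rintro ⟨a, ha, rfl⟩; simpa using ha
    · intro h; exact ⟨x + k, h, by ring⟩
  have h1 : (A.filter fun x => x + k ∈ A) = A ∩ B := by
    ext x; simp [Finset.mem_filter, Finset.mem_inter, hmemB]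
  have h2 : (Aᶜ.filter fun x => x + k ∈ Aᶜ) = Aᶜ ∩ Bᶜ := by
    ext x; simp [Finset.mem_filter, Finset.mem_inter, hmemB]
  rw [h1, h2, ← Finset.compl_union]
  have hBcard : B.card = 6 := by
    rw [hB, Finset.card_image_of_injective _ (sub_left_injective), hA]
  have hcompl : (A ∪ B)ᶜ.card = 12 - (A ∪ B).card := by
    rw [Finset.card_compl]; rfl
  have hiu : (A ∩ B).card + (A ∪ B).card = 12 := by
    rw [Finset.card_inter_add_card_union, hA, hBcard]
  have hle : (A ∪ B).card ≤ 12 := by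
    have := Finset.card_le_univ (A ∪ B)
    simpa using this
  omega
end
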